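/- Let n ≥ 1, 1 ≤ k ≤ n, and let Z_1,…,Z_n be exchangeable random variables. Then for every real t and every x ≥ 0, P(Z_{n-k+1:n} > t+x, Z_{1:n} > t) = P(Z_1 > t+x, …, Z_n > t+x) + Σ_{i=1}^{n−k} C(n,i) P(t < Z_1 ≤ t+x, …, t < Z_i ≤ t+x, Z_{i+1} > t+x, …, Z_n > t+x). -/

import Mathlib

/-!
On the event in question every `Z i` exceeds `t`, and the indices `S` with `Z i ∈ (t, t + x]`
number at most `n - k`, all other variables exceeding `t + x`. So the event is the disjoint union,
over `#S ≤ n - k`, of the cells `piIocIoi t (t + x) S`. Permuting coordinates moves the cell of `S`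
to the cell of any set of the same size, so by exchangeability its probability depends only on
`#S`; grouping by `#S = i` gives `C(n, i)` copies of the cell of `{0, …, i - 1}`.
-/

open MeasureTheory ProbabilityTheory

/-- `orderStat Z j ω` is the `j`-th smallest value (1-indexed) among `Z 0 ω, …, Z (n-1) ω`. -/
noncomputable def orderStat {Ω : Type*} {n : ℕ} (Z : Fin n → Ω → ℝ) (j : ℕ) (ω : Ω) : ℝ :=
  ((List.ofFn fun i => Z i ω).mergeSort (fun x y => x ≤ y)).getD (j - 1) 0

open Finset Function
open scoped Pointwise

theorem List.lt_getD_iff_countP_le {α : Type*} [LinearOrder α] {l : List α}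
    (hl : l.Pairwise (· ≤ ·)) {j : ℕ} (hj : j < l.length) (s d : α) :
    s < l.getD j d ↔ l.countP (· ≤ s) ≤ j := by
  induction l generalizing j with
  | nil => simp at hj
  | cons a l ih =>
    obtain ⟨ha, hl⟩ := List.pairwise_cons.1 hl
    have countP_eq_zero_of_lt (has : s < a) : l.countP (· ≤ s) = 0 :=
      List.countP_eq_zero.2 fun b hb => by simpa using has.trans_le (ha b hb)
    cases j with
    | zero =>
      simp only [List.getD_cons_zero, List.countP_cons, nonpos_iff_eq_zero, Nat.add_eq_zero_iff]
      by_cases has : s < a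
      · simp [has, countP_eq_zero_of_lt has]
      · simp [has, not_lt.1 has]
    | succ j =>
      rw [List.getD_cons_succ, ih hl (by simpa using hj), List.countP_cons]
      by_cases has : s < a
      · simp [countP_eq_zero_of_lt has, not_le.2 has]
      · simp [not_lt.1 has]

theorem List.countP_ofFn {α : Type*} {n : ℕ} (f : Fin n → α) (p : α → Prop) [DecidablePred p] :
    (List.ofFn f).countP (fun a => decide (p a)) = #{i | p (f i)} := by
  rw [← Multiset.coe_countP, ← Fin.univ_val_map, Multiset.countP_map]
  rfl

theorem lt_orderStat_iff {Ω : Type*} {n : ℕ} (Z : Fin n → Ω → ℝ) (ω : Ω) {j : ℕ}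
    (hj0 : 0 < j) (hjn : j ≤ n) (s : ℝ) :
    s < orderStat Z j ω ↔ #{i | Z i ω ≤ s} < j := by
  rw [orderStat, List.lt_getD_iff_countP_le (List.pairwise_mergeSort' _ _)
      (by rw [List.length_mergeSort, List.length_ofFn]; omega),
    (List.mergeSort_perm _ _).countP_eq, List.countP_ofFn]
  omega

theorem lt_orderStat_one_iff {Ω : Type*} {n : ℕ} (Z : Fin n → Ω → ℝ) (ω : Ω) (hn : 0 < n)
    (s : ℝ) : s < orderStat Z 1 ω ↔ ∀ i, s < Z i ω := by
  simp [lt_orderStat_iff Z ω one_pos hn, filter_eq_empty_iff]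

theorem lt_orderStat_sub_add_one_iff {Ω : Type*} {n k : ℕ} (Z : Fin n → Ω → ℝ) (ω : Ω)
    (hn : 0 < n) (hk : 0 < k) (s : ℝ) :
    s < orderStat Z (n - k + 1) ω ↔ #{i | Z i ω ≤ s} ≤ n - k := by
  rw [lt_orderStat_iff Z ω (Nat.succ_pos _) (by omega), Nat.lt_succ_iff]

section piIocIoi

variable {ι α : Type*} [DecidableEq ι] [LinearOrder α]

def piIocIoi (a b : α) (S : Finset ι) : Set (ι → α) :=
  Set.univ.pi fun i => if i ∈ S then Set.Ioc a b else Set.Ioi b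

theorem piIocIoi_empty (a b : α) : piIocIoi a b (∅ : Finset ι) = {v | ∀ i, b < v i} := by
  ext v
  simp [piIocIoi]

theorem mem_piIocIoi_iff [Fintype ι] {a b : α} (hab : a ≤ b) {S : Finset ι} {v : ι → α} :
    v ∈ piIocIoi a b S ↔ (∀ i, a < v i) ∧ ({i | v i ≤ b} : Finset ι) = S := by
  simp only [piIocIoi, Set.mem_univ_pi, Finset.ext_iff, Finset.mem_filter_univ, ← forall_and]
  refine forall_congr' fun i => ?_
  by_cases hi : i ∈ S
  · simp [hi]
  · simp only [hi, if_false, Set.mem_Ioi, iff_false, not_le]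
    exact ⟨fun h => ⟨hab.trans_lt h, h⟩, And.right⟩

theorem preimage_comp_perm_piIocIoi (σ : Equiv.Perm ι) (a b : α) (S : Finset ι) :
    (fun v => v ∘ σ) ⁻¹' piIocIoi a b S = piIocIoi a b (σ • S) := by
  ext v
  simp only [piIocIoi, Set.mem_preimage, Set.mem_univ_pi, Function.comp_apply]
  refine σ.forall_congr fun {i} => ?_
  simp only [← Equiv.Perm.smul_def, Finset.smul_mem_smul_finset_iff]

theorem pairwise_disjoint_piIocIoi [Fintype ι] {a b : α} (hab : a ≤ b) :
    Pairwise (Disjoint on (piIocIoi a b : Finset ι → Set (ι → α))) := fun _ _ hST =>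
  Set.disjoint_left.2 fun _ hS hT =>
    hST (((mem_piIocIoi_iff hab).1 hS).2.symm.trans ((mem_piIocIoi_iff hab).1 hT).2)

theorem biUnion_piIocIoi_card_le [Fintype ι] {a b : α} (hab : a ≤ b) (m : ℕ) :
    ⋃ S ∈ ({S | #S ≤ m} : Finset (Finset ι)), piIocIoi a b S
      = {v | (∀ i, a < v i) ∧ #{i | v i ≤ b} ≤ m} := by
  ext v
  simp only [Set.mem_iUnion, mem_filter_univ, mem_piIocIoi_iff hab, exists_prop]
  constructor
  · rintro ⟨S, hS, hv, rfl⟩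
    exact ⟨hv, hS⟩
  · rintro ⟨hv, hcard⟩
    exact ⟨_, hcard, hv, rfl⟩

theorem mem_piIocIoi_filter_lt_iff {n : ℕ} {a b : α} {i : ℕ} {v : Fin n → α} :
    v ∈ piIocIoi a b ({l | (l : ℕ) < i} : Finset (Fin n))
      ↔ (∀ l : Fin n, (l : ℕ) < i → a < v l ∧ v l ≤ b) ∧ ∀ l : Fin n, i ≤ (l : ℕ) → b < v l := by
  simp only [piIocIoi, Set.mem_univ_pi, mem_filter_univ, ← forall_and]
  refine forall_congr' fun l => ?_
  split_ifs with hl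
  · simp [hl, not_le.2 hl]
  · simp [hl, not_lt.1 hl]

theorem measurableSet_piIocIoi [Countable ι] [TopologicalSpace α] [OrderClosedTopology α]
    [MeasurableSpace α] [OpensMeasurableSpace α] (a b : α) (S : Finset ι) :
    MeasurableSet (piIocIoi a b S) :=
  MeasurableSet.univ_pi fun i => by split_ifs; exacts [measurableSet_Ioc, measurableSet_Ioi]

end piIocIoi

section exchangeable

variable {ι α : Type*} [Fintype ι] [DecidableEq ι] [LinearOrder α] [TopologicalSpace α]
  [OrderClosedTopology α] [MeasurableSpace α] [OpensMeasurableSpace α] {μ : Measure (ι → α)}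

theorem measure_piIocIoi_eq_of_card_eq (hμ : ∀ σ : Equiv.Perm ι, μ.map (fun v => v ∘ σ) = μ)
    (a b : α) {S T : Finset ι} (hST : #S = #T) : μ (piIocIoi a b S) = μ (piIocIoi a b T) := by
  have := Set.powersetCard.isPretransitive (α := ι) (n := #S)
  obtain ⟨σ, hσ⟩ := MulAction.exists_smul_eq (Equiv.Perm ι)
    (⟨S, rfl⟩ : Set.powersetCard ι #S) ⟨T, hST.symm⟩
  have hσS : σ • S = T := congrArg Subtype.val hσ
  rw [← hσS, ← preimage_comp_perm_piIocIoi, ← Measure.map_apply (by fun_prop)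
    (measurableSet_piIocIoi a b S), hμ]

theorem measureReal_biUnion_piIocIoi [IsFiniteMeasure μ]
    (hμ : ∀ σ : Equiv.Perm ι, μ.map (fun v => v ∘ σ) = μ) {a b : α} (hab : a ≤ b) {m : ℕ}
    (T : ℕ → Finset ι) (hT : ∀ i ≤ m, #(T i) = i) :
    μ.real (⋃ S ∈ ({S | #S ≤ m} : Finset (Finset ι)), piIocIoi a b S)
      = ∑ i ∈ range (m + 1), ((Fintype.card ι).choose i : ℝ) * μ.real (piIocIoi a b (T i)) := by
  rw [measureReal_biUnion_finset ((pairwise_disjoint_piIocIoi hab).set_pairwise _)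
      fun S _ => measurableSet_piIocIoi a b S,
    ← sum_fiberwise_of_maps_to (g := card) (t := range (m + 1))
      fun S hS => by simpa [Nat.lt_succ_iff] using hS]
  refine sum_congr rfl fun i hmem => ?_
  have hi : i ≤ m := Nat.lt_succ_iff.1 (mem_range.1 hmem)
  have hfiber : ({S | #S ≤ m} : Finset (Finset ι)).filter (#· = i) = powersetCard i univ := by
    ext S
    simp only [mem_filter, mem_univ, true_and, mem_powersetCard, subset_univ]
    omega
  have hcell : ∀ S ∈ powersetCard i univ, μ.real (piIocIoi a b S) = μ.real (piIocIoi a b (T i)) :=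
    fun S hS => by
      rw [measureReal_def, measureReal_def, measure_piIocIoi_eq_of_card_eq hμ a b
        ((mem_powersetCard.1 hS).2.trans (hT i hi).symm)]
  rw [hfiber, sum_congr rfl hcell, sum_const, card_powersetCard, card_univ, nsmul_eq_mul]

end exchangeable

theorem joint_survival_order_statistics_exchangeable_general
    {Ω : Type*} [MeasurableSpace Ω] (P : Measure Ω) [IsProbabilityMeasure P]
    (n k : ℕ) (hn : 1 ≤ n) (hk1 : 1 ≤ k)
    (Z : Fin n → Ω → ℝ) (hZm : ∀ i, Measurable (Z i))
    (hexch : ∀ σ : Equiv.Perm (Fin n),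
      Measure.map (fun ω => fun i => Z (σ i) ω) P = Measure.map (fun ω => fun i => Z i ω) P)
    (t x : ℝ) (hx : 0 ≤ x) :
    (P {ω | t + x < orderStat Z (n - k + 1) ω ∧ t < orderStat Z 1 ω}).toReal
      = (P {ω | ∀ l : Fin n, t + x < Z l ω}).toReal
        + ∑ i ∈ Finset.Icc 1 (n - k), (n.choose i : ℝ) *
            (P {ω | (∀ l : Fin n, (l : ℕ) < i → t < Z l ω ∧ Z l ω ≤ t + x)
              ∧ (∀ l : Fin n, i ≤ (l : ℕ) → t + x < Z l ω)}).toReal := by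
  set Y : Ω → Fin n → ℝ := fun ω i => Z i ω
  have hY : Measurable Y := measurable_pi_lambda _ hZm
  have hlaw : ∀ σ : Equiv.Perm (Fin n), (P.map Y).map (fun v => v ∘ σ) = P.map Y := fun σ => by
    rw [Measure.map_map (by fun_prop) hY]
    exact hexch σ
  have hevent : {ω | t + x < orderStat Z (n - k + 1) ω ∧ t < orderStat Z 1 ω}
      = Y ⁻¹' ⋃ S ∈ ({S | #S ≤ n - k} : Finset (Finset (Fin n))), piIocIoi t (t + x) S := by
    ext ω
    rw [biUnion_piIocIoi_card_le (by linarith), Set.mem_preimage, Set.mem_ofPred, Set.mem_ofPred,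
      lt_orderStat_sub_add_one_iff Z ω hn hk1, lt_orderStat_one_iff Z ω hn, and_comm]
  have hcell (i : ℕ) : {ω | (∀ l : Fin n, (l : ℕ) < i → t < Z l ω ∧ Z l ω ≤ t + x)
      ∧ (∀ l : Fin n, i ≤ (l : ℕ) → t + x < Z l ω)} = Y ⁻¹' piIocIoi t (t + x) {l | l < i} := by
    ext ω
    exact mem_piIocIoi_filter_lt_iff.symm
  simp only [← measureReal_def, hevent]
  rw [← map_measureReal_apply hY
      (Finset.measurableSet_biUnion _ fun S _ => measurableSet_piIocIoi _ _ S),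
    measureReal_biUnion_piIocIoi hlaw (by linarith) (fun i => {l | l < i})
      fun i hi => by rw [Fin.card_filter_val_lt]; omega,
    range_eq_Ico, sum_eq_sum_Ico_succ_bot (by omega : 0 < n - k + 1), Ico_add_one_right_eq_Icc]
  simp only [map_measureReal_apply hY (measurableSet_piIocIoi _ _ _)]
  simp [hcell, piIocIoi_empty, Y]

theorem joint_survival_order_statistics_exchangeable
    {Ω : Type*} [MeasurableSpace Ω] (P : Measure Ω) [IsProbabilityMeasure P]
    (n k : ℕ) (hn : 1 ≤ n) (hk1 : 1 ≤ k) (hkn : k ≤ n)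
    (Z : Fin n → Ω → ℝ) (hZm : ∀ i, Measurable (Z i))
    (hexch : ∀ σ : Equiv.Perm (Fin n),
      Measure.map (fun ω => fun i => Z (σ i) ω) P = Measure.map (fun ω => fun i => Z i ω) P)
    (t x : ℝ) (hx : 0 ≤ x) :
    (P {ω | t + x < orderStat Z (n - k + 1) ω ∧ t < orderStat Z 1 ω}).toReal
      = (P {ω | ∀ l : Fin n, t + x < Z l ω}).toReal
        + ∑ i ∈ Finset.Icc 1 (n - k), (n.choose i : ℝ) *
            (P {ω | (∀ l : Fin n, (l : ℕ) < i → t < Z l ω ∧ Z l ω ≤ t + x)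
              ∧ (∀ l : Fin n, i ≤ (l : ℕ) → t + x < Z l ω)}).toReal :=
  joint_survival_order_statistics_exchangeable_general P n k hn hk1 Z hZm hexch t x hx
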